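/- Let λ ∈ [0,2π) and assume inf_{x∈ℤ} |e^{iλ} − a_x^{(2,2)}| > 0. Then e^{iλ} is an eigenvalue of U if and only if there exists a nonzero Ψ̃ ∈ ℓ²(ℤ;ℂ²) such that: for every x with A_x(λ) ≠ 0, Ψ̃(x+1) = T_x(λ) Ψ̃(x); and for every x with A_x(λ) = 0, conj(a_x^{(1,1)}) a_x^{(2,1)} Ψ̃₁(x) = a_x^{(3,3)} conj(a_x^{(3,2)}) Ψ̃₂(x) and a_x^{(3,3)} conj(a_x^{(2,3)}) Ψ̃₁(x+1) = conj(a_x^{(1,1)}) a_x^{(1,2)} Ψ̃₂(x+1). -/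

import Mathlib

open Complex Matrix ComplexConjugate

noncomputable section

/-- `μ` is an eigenvalue of the time-evolution operator `U = SC` of the three-state
quantum walk on `ℤ` with coin matrices `a x`. -/
def IsQWEigenvalue (a : ℤ → Matrix (Fin 3) (Fin 3) ℂ) (μ : ℂ) : Prop :=
  ∃ Ψ : ℤ → Fin 3 → ℂ, Ψ ≠ 0 ∧
    Summable (fun x : ℤ => ∑ i, ‖Ψ x i‖ ^ 2) ∧
    ∀ x : ℤ,
      μ * Ψ x 0 = ∑ j, a (x + 1) 0 j * Ψ (x + 1) j ∧
      μ * Ψ x 1 = ∑ j, a x 1 j * Ψ x j ∧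
      μ * Ψ x 2 = ∑ j, a (x - 1) 2 j * Ψ (x - 1) j

/-- `A(λ)` for a 3×3 coin matrix `M`. -/
def coefA (M : Matrix (Fin 3) (Fin 3) ℂ) (lam : ℝ) : ℂ :=
  M 0 0 + M 0 1 * M 1 0 / (Complex.exp (lam * Complex.I) - M 1 1)

/-- The transfer matrix `T(λ)` of a 3×3 coin matrix `M`. -/
def transfer (M : Matrix (Fin 3) (Fin 3) ℂ) (lam : ℝ) : Matrix (Fin 2) (Fin 2) ℂ :=
  (M 0 0 * Complex.exp (lam * Complex.I) - M.det * conj (M 2 2))⁻¹ •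
    !![Complex.exp (lam * Complex.I) * (Complex.exp (lam * Complex.I) - M 1 1),
        -(M 0 2 * Complex.exp (lam * Complex.I)) - M.det * conj (M 2 0);
        M 2 0 * Complex.exp (lam * Complex.I) + M.det * conj (M 0 2),
        -(M.det * (Complex.exp (-(lam * Complex.I)) - conj (M 1 1)))]

/-!
Because `e^{iλ} - a_x^{(2,2)}` stays away from `0`, the middle equation of `UΨ = e^{iλ}Ψ` can be
solved for `Ψ₂(x)`, a bounded linear function of `Ψ₁(x)` and `Ψ₃(x)`. Substituting it into the
other two equations leaves a relation between `Ψ̃(x) = (Ψ₁(x-1), Ψ₃(x))` and `Ψ̃(x+1)` with the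
coefficients `A_x, B_x, C_x, D_x`, and this reduction preserves both nonvanishing and square
summability in each direction.

It remains to read this relation site by site, using that a unitary `C` satisfies
`det C · conj (C_{ji}) = adj(C)_{ij}`. Where `A_x ≠ 0` these cofactor identities turn `T_x(λ)`
into `A_x⁻¹ [[e^{iλ}, -B_x], [C_x, (A_x D_x - B_x C_x) e^{-iλ}]]`, which solves the relation for
`Ψ̃(x+1)`. Where `A_x = 0` they give `D_x = 0` and express `B_x`, `C_x` through the two stated
constraints, whose coefficients `conj a^{(1,1)} a^{(2,1)}` and `conj a^{(1,1)} a^{(1,2)}` are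
nonzero: otherwise a row or column of `C_x` would reduce to `a^{(1,3)}` or `a^{(3,1)}`, of
modulus `1`.
-/

namespace ThreeStateWalk

variable {M : Matrix (Fin 3) (Fin 3) ℂ} {μ : ℂ}

lemma sum_norm_sq_row (hM : M ∈ unitaryGroup (Fin 3) ℂ) (i : Fin 3) :
    ∑ k, ‖M i k‖ ^ 2 = 1 := by
  have h := congrFun (congrFun (mem_unitaryGroup_iff.mp hM) i) i
  simp only [mul_apply, star_apply, RCLike.star_def, mul_conj', one_apply_eq] at h
  exact_mod_cast h

lemma sum_norm_sq_col (hM : M ∈ unitaryGroup (Fin 3) ℂ) (j : Fin 3) :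
    ∑ k, ‖M k j‖ ^ 2 = 1 := by
  have h := congrFun (congrFun (mem_unitaryGroup_iff'.mp hM) j) j
  simp only [mul_apply, star_apply, RCLike.star_def, conj_mul', one_apply_eq] at h
  exact_mod_cast h

lemma det_mul_conj_eq_adjugate (hM : M ∈ unitaryGroup (Fin 3) ℂ) (i j : Fin 3) :
    M.det * conj (M j i) = adjugate M i j := by
  have hinv : Mᴴ * M = 1 := mem_unitaryGroup_iff'.mp hM
  have : adjugate M = M.det • Mᴴ := by
    calc adjugate M = Mᴴ * M * adjugate M := by rw [hinv, one_mul]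
      _ = M.det • Mᴴ := by rw [mul_assoc, mul_adjugate, Matrix.mul_smul, mul_one]
  simp [this]

/-- The paper's `A, B, C, D` are `schurEntry M μ i j` for `i, j ∈ {0, 2}` (Lean indices start
at `0`): the entries of the Schur complement that eliminates the middle component. -/
def schurEntry (M : Matrix (Fin 3) (Fin 3) ℂ) (μ : ℂ) (i j : Fin 3) : ℂ :=
  M i j + M i 1 * M 1 j / (μ - M 1 1)

lemma schurEntry_mul_sub (hs : μ - M 1 1 ≠ 0) (i j : Fin 3) :
    schurEntry M μ i j * (μ - M 1 1) = M i j * (μ - M 1 1) + M i 1 * M 1 j := by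
  rw [schurEntry]
  field_simp

lemma sum_eq_schurEntry (hs : μ - M 1 1 ≠ 0) {ψ : Fin 3 → ℂ}
    (hψ : μ * ψ 1 = ∑ j, M 1 j * ψ j) (i : Fin 3) :
    ∑ j, M i j * ψ j = schurEntry M μ i 0 * ψ 0 + schurEntry M μ i 2 * ψ 2 := by
  rw [Fin.sum_univ_three] at hψ ⊢
  have hmid : ψ 1 = (M 1 0 * ψ 0 + M 1 2 * ψ 2) / (μ - M 1 1) := by
    field_simp
    linear_combination hψ
  rw [hmid, schurEntry, schurEntry]
  field_simp
  ring

def fillMiddle (M : Matrix (Fin 3) (Fin 3) ℂ) (μ p q : ℂ) : Fin 3 → ℂ :=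
  ![p, (M 1 0 * p + M 1 2 * q) / (μ - M 1 1), q]

lemma mul_fillMiddle_one (hs : μ - M 1 1 ≠ 0) (p q : ℂ) :
    μ * fillMiddle M μ p q 1 = ∑ j, M 1 j * fillMiddle M μ p q j := by
  simp only [fillMiddle, Fin.sum_univ_three, cons_val_zero, cons_val_one, cons_val_two,
    head_cons, tail_cons]
  field_simp
  ring

lemma norm_sq_fillMiddle_one_le {ε C : ℝ} (hε : 0 < ε) (hsep : ε ≤ ‖μ - M 1 1‖)
    (hC : ∀ j, ‖M 1 j‖ ≤ C) (p q : ℂ) :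
    ‖fillMiddle M μ p q 1‖ ^ 2 ≤ 2 * (C / ε) ^ 2 * (‖p‖ ^ 2 + ‖q‖ ^ 2) := by
  have hC0 : 0 ≤ C := (norm_nonneg _).trans (hC 0)
  have hnum : ‖M 1 0 * p + M 1 2 * q‖ ≤ C * (‖p‖ + ‖q‖) := by
    calc ‖M 1 0 * p + M 1 2 * q‖ ≤ ‖M 1 0‖ * ‖p‖ + ‖M 1 2‖ * ‖q‖ := by
          simpa only [norm_mul] using norm_add_le (M 1 0 * p) (M 1 2 * q)
      _ ≤ C * (‖p‖ + ‖q‖) := by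
          rw [mul_add]
          gcongr
          exacts [hC 0, hC 2]
  have hmid : ‖fillMiddle M μ p q 1‖ ≤ C / ε * (‖p‖ + ‖q‖) := by
    simp only [fillMiddle, cons_val_one, cons_val_zero, norm_div]
    rw [div_mul_eq_mul_div]
    exact div_le_div₀ (by positivity) hnum hε hsep
  calc ‖fillMiddle M μ p q 1‖ ^ 2 ≤ (C / ε * (‖p‖ + ‖q‖)) ^ 2 := by gcongr
    _ = (C / ε) ^ 2 * (‖p‖ + ‖q‖) ^ 2 := mul_pow _ _ _
    _ ≤ (C / ε) ^ 2 * (2 * (‖p‖ ^ 2 + ‖q‖ ^ 2)) := by gcongr; exact add_sq_le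
    _ = 2 * (C / ε) ^ 2 * (‖p‖ ^ 2 + ‖q‖ ^ 2) := by ring

/-- The eigenvalue equations at one site with the middle component eliminated, for `v = Ψ̃(x)`
and `w = Ψ̃(x+1)`. -/
def ReducedEigenRel (M : Matrix (Fin 3) (Fin 3) ℂ) (μ : ℂ) (v w : Fin 2 → ℂ) : Prop :=
  μ * v 0 = schurEntry M μ 0 0 * w 0 + schurEntry M μ 0 2 * v 1 ∧
    μ * w 1 = schurEntry M μ 2 0 * w 0 + schurEntry M μ 2 2 * v 1

lemma inv_smul_mulVec_eq_iff {α β γ δ μ : ℂ} (hα : α ≠ 0) (hμ : μ ≠ 0) (v w : Fin 2 → ℂ) :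
    (α⁻¹ • !![μ, -β; γ, (α * δ - β * γ) / μ]) *ᵥ v = w ↔
      μ * v 0 = α * w 0 + β * v 1 ∧ μ * w 1 = γ * w 0 + δ * v 1 := by
  rw [funext_iff, Fin.forall_fin_two]
  simp only [smul_mulVec, cons_mulVec, dotProduct, Fin.sum_univ_two, cons_val_zero, cons_val_one,
    cons_val_fin_one, neg_mul, empty_mulVec, Pi.smul_apply, smul_eq_mul]
  constructor
  · rintro ⟨h0, h1⟩
    constructor
    · rw [← h0]; field_simp; ring
    · rw [← h1, ← h0]; field_simp; ring
  · rintro ⟨h0, h1⟩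
    constructor
    · field_simp; linear_combination h0
    · field_simp; linear_combination γ * h0 - α * h1

def schurDet (M : Matrix (Fin 3) (Fin 3) ℂ) (μ : ℂ) : ℂ :=
  schurEntry M μ 0 0 * schurEntry M μ 2 2 - schurEntry M μ 0 2 * schurEntry M μ 2 0

lemma schurDet_mul_sub (hM : M ∈ unitaryGroup (Fin 3) ℂ) (hs : μ - M 1 1 ≠ 0) :
    schurDet M μ * (μ - M 1 1) = μ * M.det * conj (M 1 1) - M.det := by
  have c11 : M.det * conj (M 1 1) = M 0 0 * M 2 2 - M 0 2 * M 2 0 := by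
    simpa [adjugate_fin_three] using det_mul_conj_eq_adjugate hM 1 1
  have S := schurEntry_mul_sub (M := M) hs
  rw [schurDet]
  refine mul_right_cancel₀ hs ?_
  linear_combination -(μ * (μ - M 1 1)) * c11 + (μ - M 1 1) * det_fin_three M
    + (schurEntry M μ 2 2 * (μ - M 1 1)) * S 0 0
    + (M 0 0 * (μ - M 1 1) + M 0 1 * M 1 0) * S 2 2
    - (schurEntry M μ 2 0 * (μ - M 1 1)) * S 0 2
    - (M 0 2 * (μ - M 1 1) + M 0 1 * M 1 2) * S 2 0

-- At `A = 0` both sides are `0`, since `0⁻¹ = 0`.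
lemma transfer_eq (hM : M ∈ unitaryGroup (Fin 3) ℂ) {lam : ℝ}
    (hs : exp (lam * I) - M 1 1 ≠ 0) :
    transfer M lam = (schurEntry M (exp (lam * I)) 0 0)⁻¹ •
      !![exp (lam * I), -schurEntry M (exp (lam * I)) 0 2;
        schurEntry M (exp (lam * I)) 2 0, schurDet M (exp (lam * I)) / exp (lam * I)] := by
  set μ := exp (lam * I) with hμ
  have hμ0 : μ ≠ 0 := exp_ne_zero _
  have c22 : M.det * conj (M 2 2) = M 0 0 * M 1 1 - M 0 1 * M 1 0 := by
    simpa [adjugate_fin_three] using det_mul_conj_eq_adjugate hM 2 2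
  have c20 : M.det * conj (M 2 0) = M 0 1 * M 1 2 - M 0 2 * M 1 1 := by
    simpa [adjugate_fin_three] using det_mul_conj_eq_adjugate hM 0 2
  have c02 : M.det * conj (M 0 2) = M 1 0 * M 2 1 - M 1 1 * M 2 0 := by
    simpa [adjugate_fin_three] using det_mul_conj_eq_adjugate hM 2 0
  have S := schurEntry_mul_sub (M := M) hs
  have hden : M 0 0 * μ - M.det * conj (M 2 2) = schurEntry M μ 0 0 * (μ - M 1 1) := by
    linear_combination -c22 - S 0 0
  have hN : !![μ * (μ - M 1 1), -(M 0 2 * μ) - M.det * conj (M 2 0);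
        M 2 0 * μ + M.det * conj (M 0 2), -(M.det * (μ⁻¹ - conj (M 1 1)))] =
      (μ - M 1 1) • !![μ, -schurEntry M μ 0 2; schurEntry M μ 2 0, schurDet M μ / μ] := by
    ext i j
    fin_cases i <;> fin_cases j <;>
      simp only [Fin.zero_eta, Fin.mk_one, of_apply, cons_val', cons_val_zero, cons_val_one,
        cons_val_fin_one, Matrix.smul_apply, smul_eq_mul, mul_neg]
    · ring
    · linear_combination -c20 + S 0 2
    · linear_combination c02 - S 2 0
    · field_simp
      linear_combination -schurDet_mul_sub hM hs
  rw [transfer, ← hμ, exp_neg, hden, hN, smul_smul, mul_inv, mul_assoc, inv_mul_cancel₀ hs,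
    mul_one]

section SchurEntryZero

variable (hM : M ∈ unitaryGroup (Fin 3) ℂ) (hs : μ - M 1 1 ≠ 0) (hA : schurEntry M μ 0 0 = 0)
include hM hs hA

lemma det_mul_conj_zero_zero_eq (hμ : ‖μ‖ = 1) : M.det * conj (M 0 0) = μ * M 2 2 := by
  have hdet : conj M.det * M.det = 1 := Unitary.star_mul_self_of_mem (det_of_mem_unitary hM)
  have hμ' : conj μ * μ = 1 := by rw [conj_mul', hμ]; norm_num
  have c22 : M.det * conj (M 2 2) = M 0 0 * M 1 1 - M 0 1 * M 1 0 := by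
    simpa [adjugate_fin_three] using det_mul_conj_eq_adjugate hM 2 2
  have h22 : M.det * conj (M 2 2) = M 0 0 * μ := by
    linear_combination c22 + schurEntry_mul_sub hs 0 0 - (μ - M 1 1) * hA
  have h22' := congrArg conj h22
  simp only [map_mul, conj_conj] at h22'
  linear_combination -M.det * conj (M 0 0) * hμ' - μ * M.det * h22' + μ * M 2 2 * hdet

lemma schurEntry_two_two_eq_zero (hμ : ‖μ‖ = 1) : schurEntry M μ 2 2 = 0 := by
  have c00 : M.det * conj (M 0 0) = M 1 1 * M 2 2 - M 1 2 * M 2 1 := by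
    simpa [adjugate_fin_three] using det_mul_conj_eq_adjugate hM 0 0
  refine (mul_eq_zero.mp ?_).resolve_right hs
  linear_combination schurEntry_mul_sub hs 2 2 + c00 - det_mul_conj_zero_zero_eq hM hs hA hμ

lemma mul_conj_two_one_eq_schurEntry (hμ : ‖μ‖ = 1) :
    μ * (M 2 2 * conj (M 2 1)) = schurEntry M μ 0 2 * (conj (M 0 0) * M 1 0) := by
  have c21 : M.det * conj (M 2 1) = -(M 0 0 * M 1 2) + M 0 2 * M 1 0 := by
    simpa [adjugate_fin_three] using det_mul_conj_eq_adjugate hM 1 2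
  have h00 := det_mul_conj_zero_zero_eq hM hs hA hμ
  refine mul_left_cancel₀ (UnitaryGroup.det_isUnit ⟨M, hM⟩).ne_zero (mul_right_cancel₀ hs ?_)
  linear_combination μ * M 2 2 * (μ - M 1 1) * c21
    - (M 0 2 * (μ - M 1 1) + M 0 1 * M 1 2) * M 1 0 * h00
    - M 1 0 * M.det * conj (M 0 0) * schurEntry_mul_sub hs 0 2
    - μ * M 2 2 * M 1 2 * (μ - M 1 1) * hA + μ * M 2 2 * M 1 2 * schurEntry_mul_sub hs 0 0

lemma mul_conj_one_two_eq_schurEntry (hμ : ‖μ‖ = 1) :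
    μ * (M 2 2 * conj (M 1 2)) = schurEntry M μ 2 0 * (conj (M 0 0) * M 0 1) := by
  have c12 : M.det * conj (M 1 2) = -(M 0 0 * M 2 1) + M 0 1 * M 2 0 := by
    simpa [adjugate_fin_three] using det_mul_conj_eq_adjugate hM 2 1
  have h00 := det_mul_conj_zero_zero_eq hM hs hA hμ
  refine mul_left_cancel₀ (UnitaryGroup.det_isUnit ⟨M, hM⟩).ne_zero (mul_right_cancel₀ hs ?_)
  linear_combination μ * M 2 2 * (μ - M 1 1) * c12
    - (M 2 0 * (μ - M 1 1) + M 2 1 * M 1 0) * M 0 1 * h00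
    - M 0 1 * M.det * conj (M 0 0) * schurEntry_mul_sub hs 2 0
    - μ * M 2 2 * M 2 1 * (μ - M 1 1) * hA + μ * M 2 2 * M 2 1 * schurEntry_mul_sub hs 0 0

lemma ne_zero_of_schurEntry_eq_zero (h02 : ‖M 0 2‖ ≠ 1) (h20 : ‖M 2 0‖ ≠ 1) :
    M 0 0 ≠ 0 ∧ M 0 1 * M 1 0 ≠ 0 := by
  have hN : M 0 1 * M 1 0 = -(M 0 0 * (μ - M 1 1)) := by
    linear_combination -schurEntry_mul_sub hs 0 0 + (μ - M 1 1) * hA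
  have h00 : M 0 0 ≠ 0 := by
    intro h00
    rcases mul_eq_zero.mp (hN.trans (by simp [h00])) with h01 | h10
    · have hrow : ‖M 0 2‖ ^ 2 = 1 := by
        simpa [Fin.sum_univ_three, h00, h01] using sum_norm_sq_row hM 0
      exact h02 ((pow_eq_one_iff_of_nonneg (norm_nonneg _) two_ne_zero).mp hrow)
    · have hcol : ‖M 2 0‖ ^ 2 = 1 := by
        simpa [Fin.sum_univ_three, h00, h10] using sum_norm_sq_col hM 0
      exact h20 ((pow_eq_one_iff_of_nonneg (norm_nonneg _) two_ne_zero).mp hcol)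
  exact ⟨h00, hN ▸ neg_ne_zero.mpr (mul_ne_zero h00 hs)⟩

lemma reducedEigenRel_iff_of_schurEntry_eq_zero (hμ : ‖μ‖ = 1) (h02 : ‖M 0 2‖ ≠ 1)
    (h20 : ‖M 2 0‖ ≠ 1) (v w : Fin 2 → ℂ) :
    ReducedEigenRel M μ v w ↔
      conj (M 0 0) * M 1 0 * v 0 = M 2 2 * conj (M 2 1) * v 1 ∧
        M 2 2 * conj (M 1 2) * w 0 = conj (M 0 0) * M 0 1 * w 1 := by
  obtain ⟨h00, h0110⟩ := ne_zero_of_schurEntry_eq_zero hM hs hA h02 h20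
  have hμ0 : μ ≠ 0 := norm_ne_zero_iff.mp (hμ ▸ one_ne_zero)
  have hc00 : conj (M 0 0) ≠ 0 := (map_ne_zero _).mpr h00
  have hc10 : conj (M 0 0) * M 1 0 ≠ 0 := mul_ne_zero hc00 (right_ne_zero_of_mul h0110)
  have hc01 : conj (M 0 0) * M 0 1 ≠ 0 := mul_ne_zero hc00 (left_ne_zero_of_mul h0110)
  have hB := mul_conj_two_one_eq_schurEntry hM hs hA hμ
  have hC := mul_conj_one_two_eq_schurEntry hM hs hA hμ
  rw [ReducedEigenRel, hA, schurEntry_two_two_eq_zero hM hs hA hμ]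
  refine and_congr ⟨fun h => mul_left_cancel₀ hμ0 ?_, fun h => mul_left_cancel₀ hc10 ?_⟩
    ⟨fun h => mul_left_cancel₀ hμ0 ?_, fun h => mul_left_cancel₀ hc01 ?_⟩
  · linear_combination conj (M 0 0) * M 1 0 * h - v 1 * hB
  · linear_combination μ * h + v 1 * hB
  · linear_combination w 0 * hC - conj (M 0 0) * M 0 1 * h
  · linear_combination -μ * h + w 0 * hC

end SchurEntryZero

lemma reducedEigenRel_iff {lam : ℝ} (hM : M ∈ unitaryGroup (Fin 3) ℂ) (h02 : ‖M 0 2‖ ≠ 1)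
    (h20 : ‖M 2 0‖ ≠ 1) (hs : exp (lam * I) - M 1 1 ≠ 0) (v w : Fin 2 → ℂ) :
    ReducedEigenRel M (exp (lam * I)) v w ↔
      (coefA M lam ≠ 0 → transfer M lam *ᵥ v = w) ∧
        (coefA M lam = 0 →
          conj (M 0 0) * M 1 0 * v 0 = M 2 2 * conj (M 2 1) * v 1 ∧
            M 2 2 * conj (M 1 2) * w 0 = conj (M 0 0) * M 0 1 * w 1) := by
  by_cases hA : coefA M lam = 0
  · simpa [hA] using
      reducedEigenRel_iff_of_schurEntry_eq_zero hM hs hA (norm_exp_ofReal_mul_I lam) h02 h20 v w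
  · rw [transfer_eq hM hs, schurDet,
      inv_smul_mulVec_eq_iff (α := schurEntry M (exp (lam * I)) 0 0) hA (exp_ne_zero _)]
    simp [hA, ReducedEigenRel]

def SolvesEigenEq (a : ℤ → Matrix (Fin 3) (Fin 3) ℂ) (μ : ℂ) (Ψ : ℤ → Fin 3 → ℂ) : Prop :=
  ∀ x : ℤ,
    μ * Ψ x 0 = ∑ j, a (x + 1) 0 j * Ψ (x + 1) j ∧
    μ * Ψ x 1 = ∑ j, a x 1 j * Ψ x j ∧
    μ * Ψ x 2 = ∑ j, a (x - 1) 2 j * Ψ (x - 1) j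

def SquareSummable {n : ℕ} (Ψ : ℤ → Fin n → ℂ) : Prop :=
  Summable fun x : ℤ => ∑ i, ‖Ψ x i‖ ^ 2

def toReduced (Ψ : ℤ → Fin 3 → ℂ) (x : ℤ) : Fin 2 → ℂ := ![Ψ (x - 1) 0, Ψ x 2]

def ofReduced (a : ℤ → Matrix (Fin 3) (Fin 3) ℂ) (μ : ℂ) (Φ : ℤ → Fin 2 → ℂ) (x : ℤ) :
    Fin 3 → ℂ :=
  fillMiddle (a x) μ (Φ (x + 1) 0) (Φ x 1)

variable {a : ℤ → Matrix (Fin 3) (Fin 3) ℂ}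

lemma reducedEigenRel_toReduced {Ψ : ℤ → Fin 3 → ℂ} (hΨ : SolvesEigenEq a μ Ψ) {x : ℤ}
    (hs : μ - a x 1 1 ≠ 0) : ReducedEigenRel (a x) μ (toReduced Ψ x) (toReduced Ψ (x + 1)) := by
  have E0 := (hΨ (x - 1)).1
  have E2 := (hΨ (x + 1)).2.2
  rw [sub_add_cancel] at E0
  rw [add_sub_cancel_right] at E2
  simp only [ReducedEigenRel, toReduced, cons_val_zero, cons_val_one, add_sub_cancel_right]
  rw [E0, E2, sum_eq_schurEntry hs (hΨ x).2.1, sum_eq_schurEntry hs (hΨ x).2.1]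
  exact ⟨rfl, rfl⟩

lemma solvesEigenEq_ofReduced (hs : ∀ x, μ - a x 1 1 ≠ 0) {Φ : ℤ → Fin 2 → ℂ}
    (hΦ : ∀ x, ReducedEigenRel (a x) μ (Φ x) (Φ (x + 1))) :
    SolvesEigenEq a μ (ofReduced a μ Φ) := by
  have hmid (y : ℤ) : μ * ofReduced a μ Φ y 1 = ∑ j, a y 1 j * ofReduced a μ Φ y j :=
    mul_fillMiddle_one (hs y) _ _
  intro x
  refine ⟨?_, hmid x, ?_⟩
  · rw [sum_eq_schurEntry (hs (x + 1)) (hmid (x + 1))]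
    simpa [ofReduced, fillMiddle] using (hΦ (x + 1)).1
  · rw [sum_eq_schurEntry (hs (x - 1)) (hmid (x - 1))]
    simpa [ofReduced, fillMiddle] using (hΦ (x - 1)).2

lemma toReduced_ne_zero {Ψ : ℤ → Fin 3 → ℂ} (hΨ : SolvesEigenEq a μ Ψ)
    (hs : ∀ x, μ - a x 1 1 ≠ 0) (hne : Ψ ≠ 0) : toReduced Ψ ≠ 0 := by
  contrapose! hne
  have h0 (y : ℤ) : Ψ y 0 = 0 := by simpa [toReduced] using congrFun (congrFun hne (y + 1)) 0
  have h2 (y : ℤ) : Ψ y 2 = 0 := by simpa [toReduced] using congrFun (congrFun hne y) 1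
  have h1 (y : ℤ) : Ψ y 1 = 0 := by
    have hmid := (hΨ y).2.1
    rw [Fin.sum_univ_three, h0, h2] at hmid
    exact (mul_eq_zero.mp (by linear_combination hmid)).resolve_left (hs y)
  funext y i
  fin_cases i
  exacts [h0 y, h1 y, h2 y]

lemma ofReduced_ne_zero {Φ : ℤ → Fin 2 → ℂ} (hne : Φ ≠ 0) : ofReduced a μ Φ ≠ 0 := by
  contrapose! hne
  funext x i
  fin_cases i
  · simpa [ofReduced, fillMiddle] using congrFun (congrFun hne (x - 1)) 0
  · simpa [ofReduced, fillMiddle] using congrFun (congrFun hne x) 2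

lemma SquareSummable.toReduced {Ψ : ℤ → Fin 3 → ℂ} (h : SquareSummable Ψ) :
    SquareSummable (toReduced Ψ) := by
  have hshift : Summable fun x : ℤ => ∑ i, ‖Ψ (x - 1) i‖ ^ 2 :=
    h.comp_injective (sub_left_injective (b := 1))
  refine (hshift.add h).of_nonneg_of_le (fun x => by positivity) fun x => ?_
  simp only [ThreeStateWalk.toReduced, Fin.sum_univ_two, Fin.sum_univ_three, cons_val_zero,
    cons_val_one]
  nlinarith [sq_nonneg ‖Ψ (x - 1) 1‖, sq_nonneg ‖Ψ (x - 1) 2‖, sq_nonneg ‖Ψ x 0‖,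
    sq_nonneg ‖Ψ x 1‖]

lemma SquareSummable.ofReduced {ε C : ℝ} (hε : 0 < ε) (hsep : ∀ x, ε ≤ ‖μ - a x 1 1‖)
    (hC : ∀ x j, ‖a x 1 j‖ ≤ C) {Φ : ℤ → Fin 2 → ℂ} (h : SquareSummable Φ) :
    SquareSummable (ofReduced a μ Φ) := by
  have hshift : Summable fun x : ℤ => ∑ i, ‖Φ (x + 1) i‖ ^ 2 :=
    h.comp_injective (add_left_injective 1)
  refine ((hshift.add h).mul_left (1 + 2 * (C / ε) ^ 2)).of_nonneg_of_le
    (fun x => by positivity) fun x => ?_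
  have hmid := norm_sq_fillMiddle_one_le hε (hsep x) (hC x) (Φ (x + 1) 0) (Φ x 1)
  have hK : 0 ≤ 2 * (C / ε) ^ 2 := by positivity
  rw [Fin.sum_univ_three, Fin.sum_univ_two, Fin.sum_univ_two]
  change ‖Φ (x + 1) 0‖ ^ 2 + ‖fillMiddle (a x) μ (Φ (x + 1) 0) (Φ x 1) 1‖ ^ 2 + ‖Φ x 1‖ ^ 2 ≤ _
  nlinarith [mul_nonneg hK (sq_nonneg ‖Φ (x + 1) 1‖), mul_nonneg hK (sq_nonneg ‖Φ x 0‖),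
    sq_nonneg ‖Φ (x + 1) 1‖, sq_nonneg ‖Φ x 0‖]

theorem isQWEigenvalue_iff_exists_reducedEigenRel {ε C : ℝ} (hε : 0 < ε)
    (hsep : ∀ x, ε ≤ ‖μ - a x 1 1‖) (hC : ∀ x j, ‖a x 1 j‖ ≤ C) :
    IsQWEigenvalue a μ ↔ ∃ Φ : ℤ → Fin 2 → ℂ, Φ ≠ 0 ∧ SquareSummable Φ ∧
      ∀ x, ReducedEigenRel (a x) μ (Φ x) (Φ (x + 1)) := by
  have hs (x : ℤ) : μ - a x 1 1 ≠ 0 := norm_pos_iff.mp (hε.trans_le (hsep x))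
  constructor
  · rintro ⟨Ψ, hne, hsum, hΨ⟩
    exact ⟨toReduced Ψ, toReduced_ne_zero hΨ hs hne, SquareSummable.toReduced hsum,
      fun x => reducedEigenRel_toReduced hΨ (hs x)⟩
  · rintro ⟨Φ, hne, hsum, hΦ⟩
    exact ⟨ofReduced a μ Φ, ofReduced_ne_zero hne, hsum.ofReduced hε hsep hC,
      solvesEigenEq_ofReduced hs hΦ⟩

end ThreeStateWalk

open ThreeStateWalk

theorem eigenvalue_iff_transfer_recursion (a : ℤ → Matrix (Fin 3) (Fin 3) ℂ)
    (hunit : ∀ x, a x ∈ Matrix.unitaryGroup (Fin 3) ℂ)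
    (h13 : ∀ x, ‖a x 0 2‖ ≠ 1) (h31 : ∀ x, ‖a x 2 0‖ ≠ 1)
    (lam : ℝ)
    (hinf : 0 < ⨅ x : ℤ, ‖Complex.exp (lam * Complex.I) - a x 1 1‖) :
    IsQWEigenvalue a (Complex.exp (lam * Complex.I)) ↔
      ∃ Ψ : ℤ → Fin 2 → ℂ, Ψ ≠ 0 ∧
        Summable (fun x : ℤ => ∑ i, ‖Ψ x i‖ ^ 2) ∧
        ∀ x : ℤ,
          (coefA (a x) lam ≠ 0 → (transfer (a x) lam).mulVec (Ψ x) = Ψ (x + 1)) ∧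
          (coefA (a x) lam = 0 →
            conj (a x 0 0) * a x 1 0 * Ψ x 0 = a x 2 2 * conj (a x 2 1) * Ψ x 1 ∧
            a x 2 2 * conj (a x 1 2) * Ψ (x + 1) 0 =
              conj (a x 0 0) * a x 0 1 * Ψ (x + 1) 1) := by
  have hsep (x : ℤ) : ⨅ y : ℤ, ‖exp (lam * I) - a y 1 1‖ ≤ ‖exp (lam * I) - a x 1 1‖ :=
    ciInf_le ⟨0, by rintro _ ⟨y, rfl⟩; positivity⟩ x
  have hs (x : ℤ) : exp (lam * I) - a x 1 1 ≠ 0 := norm_pos_iff.mp (hinf.trans_le (hsep x))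
  rw [isQWEigenvalue_iff_exists_reducedEigenRel hinf hsep
    fun x => entry_norm_bound_of_unitary (hunit x) 1]
  exact exists_congr fun Φ => and_congr_right' <| and_congr_right' <| forall_congr' fun x =>
    reducedEigenRel_iff (hunit x) (h13 x) (h31 x) (hs x) _ _
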